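/- arXiv:2505.20898 — 3 statements merged into one kernel-verified Lean document; each statement's English description precedes it below -/
import Mathlib

section
/- For all natural numbers n > 2, the inequality 6^(n-1) < binomial(n^2, n) holds. -/
/-!
Since `n * k - i ≥ n * (k - i)`, the `k` falling factors of `(n * k).descFactorial k` dominate
`n` times those of `k !`, whence `n ^ k ≤ (n * k).choose k`. With `k = n` this gives
`n ^ n ≤ (n ^ 2).choose n`, and `6 ^ (n - 1) < n ^ n` for `n ≥ 4`; the case `n = 3` is checked
directly (`36 < 84`).
-/

open Finset Nat

theorem Nat.factorial_mul_pow_le_descFactorial_mul (n k : ℕ) :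
    k ! * n ^ k ≤ (n * k).descFactorial k := by
  calc k ! * n ^ k = ∏ i ∈ range k, (k - i) * n := by
        rw [prod_mul_distrib, prod_const, card_range, ← descFactorial_eq_prod_range,
          descFactorial_self]
    _ ≤ ∏ i ∈ range k, (n * k - i) := by
        refine prod_le_prod' fun i _ => ?_
        rcases Nat.eq_zero_or_pos n with rfl | hn
        · simp
        rw [Nat.sub_mul, mul_comm k n]
        exact Nat.sub_le_sub_left (Nat.le_mul_of_pos_right i hn) _
    _ = (n * k).descFactorial k := (descFactorial_eq_prod_range _ _).symm

theorem Nat.pow_le_choose_mul (n k : ℕ) : n ^ k ≤ (n * k).choose k := by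
  have h := factorial_mul_pow_le_descFactorial_mul n k
  rw [descFactorial_eq_factorial_mul_choose] at h
  exact Nat.le_of_mul_le_mul_left h (factorial_pos k)

theorem Nat.six_pow_pred_lt_pow_self {n : ℕ} (hn : 4 ≤ n) : 6 ^ (n - 1) < n ^ n := by
  rcases Nat.lt_or_ge n 6 with h | h
  · interval_cases n <;> norm_num
  · calc 6 ^ (n - 1) < 6 ^ n := Nat.pow_lt_pow_right (by norm_num) (by omega)
      _ ≤ n ^ n := Nat.pow_le_pow_left h n

theorem six_pow_lt_choose (n : ℕ) (hn : 2 < n) :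
    6 ^ (n - 1) < Nat.choose (n ^ 2) n := by
  obtain rfl | hn4 : n = 3 ∨ 4 ≤ n := by omega
  · decide
  · calc 6 ^ (n - 1) < n ^ n := six_pow_pred_lt_pow_self hn4
      _ ≤ (n * n).choose n := pow_le_choose_mul n n
      _ = (n ^ 2).choose n := by rw [sq]
end

section
/- For all natural numbers n ≥ 1 and 0 ≤ m ≤ n, the m-th derivative of the Chebyshev polynomial of the first kind satisfies T_n^{(m)}(1) = ∏_{k=0}^{m-1} (n^2 − k^2)/(2k+1). -/
open Finset in
theorem chebyshev_T_iterated_derivative_eval_one_general (n m : ℕ) :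
    ((Polynomial.derivative)^[m] (Polynomial.Chebyshev.T ℝ (n : ℤ))).eval 1
      = ∏ k ∈ Finset.range m, (((n : ℝ) ^ 2 - (k : ℝ) ^ 2) / (2 * (k : ℝ) + 1)) := by
  simp [Polynomial.Chebyshev.iterate_derivative_T_eval_one_eq_div, prod_div_distrib]

open Finset in
theorem chebyshev_T_iterated_derivative_eval_one (n m : ℕ) (hn : 1 ≤ n) (hm : m ≤ n) :
    ((Polynomial.derivative)^[m] (Polynomial.Chebyshev.T ℝ (n : ℤ))).eval 1
      = ∏ k ∈ Finset.range m, (((n : ℝ) ^ 2 - (k : ℝ) ^ 2) / (2 * (k : ℝ) + 1)) :=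
  chebyshev_T_iterated_derivative_eval_one_general n m
end

section
/- Let f be an integer-coefficient polynomial P(z) + 1 whose constant term is 1 and whose coefficients are positive integers, with P(0) = 0 and P(1) + 1 ≠ 0. If P(−1) ≠ −1, then −1 is not a periodic point of the map z ↦ P(z) restricted to integers; that is, P^p(−1) ≠ −1 for all p ≥ 1. -/
/-! A point `y` with `P y = -1` divides `P y - P 0 = -1`, so over `ℤ` it is `1` or `-1`; the last
step of a cycle through `-1` would be such a point, and both values are excluded by hypothesis. -/

namespace Polynomial

theorem dvd_eval_of_coeff_zero_eq_zero {R : Type*} [CommSemiring R] {P : R[X]}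
    (h0 : P.coeff 0 = 0) (x : R) : x ∣ P.eval x := by
  simpa using eval_dvd (x := x) (X_dvd_iff.mpr h0)

theorem isUnit_of_eval_eq_neg_one {R : Type*} [CommRing R] {P : R[X]}
    (h0 : P.coeff 0 = 0) {x : R} (hx : P.eval x = -1) : IsUnit x :=
  isUnit_of_dvd_one (dvd_neg.mp (hx ▸ dvd_eval_of_coeff_zero_eq_zero h0 x))

end Polynomial

theorem neg_one_not_periodic_general (P : Polynomial ℤ)
    (h0 : P.coeff 0 = 0)
    (h1 : P.eval 1 + 1 ≠ 0)
    (hm1 : P.eval (-1) ≠ -1) :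
    ∀ p : ℕ, 1 ≤ p → (fun z : ℤ => P.eval z)^[p] (-1) ≠ -1 := by
  intro p hp hperiodic
  obtain ⟨q, rfl⟩ := Nat.exists_eq_add_of_le' hp
  rw [Function.iterate_succ_apply'] at hperiodic
  generalize (fun z : ℤ => P.eval z)^[q] (-1) = y at hperiodic
  rcases Int.isUnit_iff.mp (Polynomial.isUnit_of_eval_eq_neg_one h0 hperiodic) with rfl | rfl
  · exact h1 (by rw [hperiodic]; rfl)
  · exact hm1 hperiodic

theorem neg_one_not_periodic (P : Polynomial ℤ)
    (h0 : P.coeff 0 = 0)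
    (hpos : ∀ i : ℕ, 1 ≤ i → i ≤ P.natDegree → 0 < P.coeff i)
    (h1 : P.eval 1 + 1 ≠ 0)
    (hm1 : P.eval (-1) ≠ -1) :
    ∀ p : ℕ, 1 ≤ p → (fun z : ℤ => P.eval z)^[p] (-1) ≠ -1 :=
  neg_one_not_periodic_general P h0 h1 hm1
end
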